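/- For the planar-shear eigenvalue problem with K = 0: (α/b+1)Γ₁₁ = Γ, (α/b+1)Γ₁₂ = 0, (α/b+1+1/(2b))Γ₁₃ = 0, (α/b+1)Γ₂₂ = Γ, (α/b+1+1/(2b))Γ₂₃ = 0, (α/b+1+1/b)Γ₃₃ = Γ with Γ = (Γ₁₁+Γ₂₂+Γ₃₃)/3: setting λ = α/b+1 and B = 1/(2b), the nonzero solutions with Γ ≠ 0 correspond exactly to λ solving λ(λ + 2B) = (2λ + λ + 2B)/3, i.e. λ₁,₂ = ½[−(B−1) ± √((B−1)² + 8B/3)], and the remaining eigenvalues are λ = 0 and λ = −B, each with a two-dimensional eigenspace. -/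

import Mathlib

/-!
Off the diagonal the system decouples: `λ Γ₁₂ = 0` and `(λ + B) Γ₁₃ = (λ + B) Γ₂₃ = 0`.
For `λ ∉ {0, -B}` only the diagonal survives; weighting its three equations by
`λ + 2B`, `λ + 2B`, `λ` and adding gives `λ(λ + 2B) Γ̄ = (2(λ + 2B) + λ) Γ̄ / 3`, and `Γ̄ ≠ 0`
because `Γ̄ = 0` would force `Γ₁₁ = Γ₂₂ = 0` and then `Γ₃₃ = 3Γ̄ = 0`.
Conversely `diag(λ + 2B, λ + 2B, λ)` solves the system at each root `λ`.
At `λ = 0` the equations force `Γ̄ = 0`, hence `Γ₃₃ = 0` and `Γ₂₂ = -Γ₁₁`; at `λ = -B` they give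
`Γ₁₁ = Γ₂₂ = -Γ₃₃`, so `Γ̄ = Γ₁₁/3` and `(B + 1/3) Γ₁₁ = 0` with `B > 0`.
-/

/-- The planar-shear (K = 0) moment eigenvalue system, written in terms of
`λ = α/b + 1` and `B = 1/(2b)`, for a symmetric matrix `Γ`:
`λΓ₁₁ = Γ̄`, `λΓ₁₂ = 0`, `(λ+B)Γ₁₃ = 0`, `λΓ₂₂ = Γ̄`, `(λ+B)Γ₂₃ = 0`,
`(λ+2B)Γ₃₃ = Γ̄` with `Γ̄ = (Γ₁₁+Γ₂₂+Γ₃₃)/3`. -/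
def PlanarSystem (b lam : ℝ) (Γ : Matrix (Fin 3) (Fin 3) ℝ) : Prop :=
  letI B : ℝ := 1 / (2 * b)
  letI Γbar : ℝ := (Γ 0 0 + Γ 1 1 + Γ 2 2) / 3
  lam * Γ 0 0 = Γbar ∧
  lam * Γ 0 1 = 0 ∧
  (lam + B) * Γ 0 2 = 0 ∧
  lam * Γ 1 1 = Γbar ∧
  (lam + B) * Γ 1 2 = 0 ∧
  (lam + 2 * B) * Γ 2 2 = Γbar

namespace Matrix

variable {α : Type*}

theorem IsSymm.eq_fin_three {A : Matrix (Fin 3) (Fin 3) α} (hA : A.IsSymm) :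
    A = !![A 0 0, A 0 1, A 0 2; A 0 1, A 1 1, A 1 2; A 0 2, A 1 2, A 2 2] := by
  conv_lhs => rw [eta_fin_three A]
  rw [hA.apply 0 1, hA.apply 0 2, hA.apply 1 2]

theorem isSymm_fin_three (x y z p q r : α) :
    (!![x, p, q; p, y, r; q, r, z]).IsSymm :=
  IsSymm.ext fun i j => by fin_cases i <;> fin_cases j <;> rfl

end Matrix

theorem two_mul_one_div_two_mul (b : ℝ) : 2 * (1 / (2 * b)) = 1 / b := by
  ring

theorem shear_quadratic_iff {b lamP lamM : ℝ}
    (hP : lamP = (-(1 / b - 1) + Real.sqrt ((1 / b - 1) ^ 2 + 8 / (3 * b))) / 2)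
    (hM : lamM = (-(1 / b - 1) - Real.sqrt ((1 / b - 1) ^ 2 + 8 / (3 * b))) / 2) (lam : ℝ) :
    lam * (lam + 1 / b) = (2 * (lam + 1 / b) + lam) / 3 ↔ lam = lamP ∨ lam = lamM := by
  have hdisc : discrim 1 (1 / b - 1) (-(2 / (3 * b))) = (1 / b - 1) ^ 2 + 8 / (3 * b) := by
    rw [discrim]; ring
  have hnonneg : 0 ≤ (1 / b - 1) ^ 2 + 8 / (3 * b) := by
    have : (1 / b - 1) ^ 2 + 8 / (3 * b) = (1 / b + 1 / 3) ^ 2 + 8 / 9 := by ring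
    rw [this]; positivity
  rw [← sub_eq_zero, show lam * (lam + 1 / b) - (2 * (lam + 1 / b) + lam) / 3
      = 1 * (lam * lam) + (1 / b - 1) * lam + -(2 / (3 * b)) by ring,
    quadratic_eq_zero_iff one_ne_zero (hdisc.trans (Real.mul_self_sqrt hnonneg).symm), mul_one,
    hP, hM]

theorem quadratic_of_diag_system {lam c x y z : ℝ} (hlam : lam ≠ 0)
    (hxyz : ¬(x = 0 ∧ y = 0 ∧ z = 0)) (hx : lam * x = (x + y + z) / 3)
    (hy : lam * y = (x + y + z) / 3) (hz : (lam + c) * z = (x + y + z) / 3) :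
    lam * (lam + c) = (2 * (lam + c) + lam) / 3 := by
  have hsum : x + y + z ≠ 0 := by
    intro hsum
    rw [hsum, zero_div] at hx hy
    have hx0 := (mul_eq_zero.1 hx).resolve_left hlam
    have hy0 := (mul_eq_zero.1 hy).resolve_left hlam
    exact hxyz ⟨hx0, hy0, by linarith⟩
  refine mul_right_cancel₀ hsum ?_
  linear_combination (lam + c) * hx + (lam + c) * hy + lam * hz

theorem eigenvalue_cases_of_planarSystem {b lam : ℝ} {Γ : Matrix (Fin 3) (Fin 3) ℝ}
    (hne : Γ ≠ 0) (hsym : Γ.IsSymm) (h : PlanarSystem b lam Γ) :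
    lam = 0 ∨ lam = -(1 / (2 * b)) ∨ lam * (lam + 1 / b) = (2 * (lam + 1 / b) + lam) / 3 := by
  obtain ⟨e1, e2, e3, e4, e5, e6⟩ := h
  by_cases h0 : lam = 0
  · exact Or.inl h0
  by_cases hB : lam = -(1 / (2 * b))
  · exact Or.inr (Or.inl hB)
  have hB' : lam + 1 / (2 * b) ≠ 0 := fun h => hB (eq_neg_of_add_eq_zero_left h)
  have h01 := (mul_eq_zero.1 e2).resolve_left h0
  have h02 := (mul_eq_zero.1 e3).resolve_left hB'
  have h12 := (mul_eq_zero.1 e5).resolve_left hB'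
  refine Or.inr (Or.inr ?_)
  rw [← two_mul_one_div_two_mul]
  refine quadratic_of_diag_system h0 ?_ e1 e4 e6
  rintro ⟨h00, h11, h22⟩
  apply hne
  rw [hsym.eq_fin_three, h00, h11, h22, h01, h02, h12]
  exact (Matrix.eta_fin_three 0).symm

theorem exists_planarSystem_of_quadratic {b lam : ℝ} (hb : b ≠ 0)
    (hq : lam * (lam + 1 / b) = (2 * (lam + 1 / b) + lam) / 3) :
    ∃ Γ : Matrix (Fin 3) (Fin 3) ℝ, Γ ≠ 0 ∧ Γ.IsSymm ∧ PlanarSystem b lam Γ := by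
  have hlam : lam ≠ 0 := by
    rintro rfl
    have : 2 / (3 * b) = 0 := by linear_combination -hq
    exact div_ne_zero two_ne_zero (mul_ne_zero three_ne_zero hb) this
  refine ⟨!![lam + 1 / b, 0, 0; 0, lam + 1 / b, 0; 0, 0, lam],
    fun h => hlam (congrFun (congrFun h 2) 2), Matrix.isSymm_fin_three .., ?_⟩
  simp only [PlanarSystem, two_mul_one_div_two_mul, Matrix.of_apply, Matrix.cons_val',
    Matrix.cons_val, Matrix.cons_val_fin_one, Matrix.cons_val_zero, Matrix.cons_val_one]
  exact ⟨by linear_combination hq, by ring, by ring, by linear_combination hq, by ring,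
    by linear_combination hq⟩

theorem setOf_isSymm_planarSystem_zero {b : ℝ} (hb : b ≠ 0) :
    {Γ : Matrix (Fin 3) (Fin 3) ℝ | Γ.IsSymm ∧ PlanarSystem b 0 Γ} =
      {Γ | ∃ μ1 μ2 : ℝ, Γ = !![μ1, μ2, 0; μ2, -μ1, 0; 0, 0, 0]} := by
  have hB : 1 / (2 * b) ≠ 0 := one_div_ne_zero (mul_ne_zero two_ne_zero hb)
  ext Γ
  constructor
  · rintro ⟨hsym, e1, -, e3, -, e5, e6⟩
    rw [zero_mul, eq_comm] at e1
    rw [zero_add, e1] at e6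
    rw [zero_add] at e3 e5
    have h02 := (mul_eq_zero.1 e3).resolve_left hB
    have h12 := (mul_eq_zero.1 e5).resolve_left hB
    have h22 := (mul_eq_zero.1 e6).resolve_left (mul_ne_zero two_ne_zero hB)
    have h11 : Γ 1 1 = -Γ 0 0 := by linarith
    refine ⟨Γ 0 0, Γ 0 1, hsym.eq_fin_three.trans ?_⟩
    rw [h02, h12, h22, h11]
  · rintro ⟨μ1, μ2, rfl⟩
    refine ⟨Matrix.isSymm_fin_three .., ?_⟩
    simp [PlanarSystem]

theorem setOf_isSymm_planarSystem_neg {b : ℝ} (hb : 0 < b) :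
    {Γ : Matrix (Fin 3) (Fin 3) ℝ | Γ.IsSymm ∧ PlanarSystem b (-(1 / (2 * b))) Γ} =
      {Γ | ∃ μ1 μ2 : ℝ, Γ = !![0, 0, μ1; 0, 0, μ2; μ1, μ2, 0]} := by
  have hB : 0 < 1 / (2 * b) := by positivity
  ext Γ
  constructor
  · rintro ⟨hsym, e1, e2, -, e4, -, e6⟩
    have h01 := (mul_eq_zero.1 e2).resolve_left (neg_ne_zero.2 hB.ne')
    have h11 : Γ 1 1 = Γ 0 0 := mul_left_cancel₀ hB.ne' (by linear_combination e1 - e4)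
    have h22 : Γ 2 2 = -Γ 0 0 := mul_left_cancel₀ hB.ne' (by linear_combination e6 - e1)
    rw [h11, h22] at e1
    have h00 : Γ 0 0 = 0 :=
      (mul_eq_zero.1 (by linear_combination -e1 : (1 / (2 * b) + 1 / 3) * Γ 0 0 = 0)).resolve_left
        (by positivity)
    refine ⟨Γ 0 2, Γ 1 2, hsym.eq_fin_three.trans ?_⟩
    rw [h11, h22, h00, h01, neg_zero]
  · rintro ⟨μ1, μ2, rfl⟩
    refine ⟨Matrix.isSymm_fin_three .., ?_⟩
    simp [PlanarSystem]

/-- for the planar-shear system with `K = 0`, the eigenvalues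
with `Γ ≠ 0` are exactly `0`, `−B` and the two roots
`λ± = ½[−(1/b − 1) ± √((1/b − 1)² + 8/(3b))]` of
`λ(λ + 2B) = (2(λ + 2B) + λ)/3`; moreover the eigenvalues `0` and `−B` each
have a two-dimensional eigenspace, described explicitly. -/
theorem stmt15 (b : ℝ) (hb : 0 < b) (lamP lamM : ℝ)
    (hP : lamP = (-(1 / b - 1) + Real.sqrt ((1 / b - 1) ^ 2 + 8 / (3 * b))) / 2)
    (hM : lamM = (-(1 / b - 1) - Real.sqrt ((1 / b - 1) ^ 2 + 8 / (3 * b))) / 2) :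
    (∀ lam : ℝ, lam * (lam + 1 / b) = (2 * (lam + 1 / b) + lam) / 3 ↔
        lam = lamP ∨ lam = lamM) ∧
    ({lam : ℝ | ∃ Γ : Matrix (Fin 3) (Fin 3) ℝ, Γ ≠ 0 ∧ Γ.IsSymm ∧
        PlanarSystem b lam Γ} = {0, -(1 / (2 * b)), lamP, lamM}) ∧
    ({Γ : Matrix (Fin 3) (Fin 3) ℝ | Γ.IsSymm ∧ PlanarSystem b 0 Γ} =
      {Γ | ∃ μ1 μ2 : ℝ, Γ = !![μ1, μ2, 0; μ2, -μ1, 0; 0, 0, 0]}) ∧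
    ({Γ : Matrix (Fin 3) (Fin 3) ℝ | Γ.IsSymm ∧
        PlanarSystem b (-(1 / (2 * b))) Γ} =
      {Γ | ∃ μ1 μ2 : ℝ, Γ = !![0, 0, μ1; 0, 0, μ2; μ1, μ2, 0]}) := by
  have hquad := shear_quadratic_iff hP hM
  have hzero := setOf_isSymm_planarSystem_zero hb.ne'
  have hneg := setOf_isSymm_planarSystem_neg hb
  refine ⟨hquad, ?_, hzero, hneg⟩
  ext lam
  constructor
  · rintro ⟨Γ, hne, hsym, h⟩
    rcases eigenvalue_cases_of_planarSystem hne hsym h with h0 | hB | hq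
    · exact Or.inl h0
    · exact Or.inr (Or.inl hB)
    · exact Or.inr (Or.inr ((hquad lam).1 hq))
  · rintro (rfl | rfl | rfl | rfl)
    · exact ⟨_, fun h => one_ne_zero (α := ℝ) (congrFun (congrFun h 0) 0), hzero.ge ⟨1, 0, rfl⟩⟩
    · exact ⟨_, fun h => one_ne_zero (α := ℝ) (congrFun (congrFun h 0) 2), hneg.ge ⟨1, 0, rfl⟩⟩
    · exact exists_planarSystem_of_quadratic hb.ne' ((hquad _).2 (Or.inl rfl))
    · exact exists_planarSystem_of_quadratic hb.ne' ((hquad _).2 (Or.inr rfl))
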